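/- In the setting where S(u) ∈ Mat_{2n}(𝒜) satisfies the reflection equation with shift ρ and B(u) is its upper-right n×n block, set Ř(u) := P·R(u) on ℂⁿ ⊗ ℂⁿ. Then for all admissible u₁, u₂ (u₁ ≠ u₂, u₁+u₂+ρ ≠ 0): Ř₁₂(u₁−u₂) B₁(u₁) R^t₁₂(−u₁−u₂−ρ) B₂(u₂) = B₁(u₂) R^t₁₂(−u₁−u₂−ρ) B₂(u₁) Ř₁₂(u₁−u₂), where R(u) = I − u⁻¹P and R^t(u) = I − u⁻¹Q with Q = Σ_{i,j} e_{ij} ⊗ e_{j̄ ī} of orthogonal type (ī = n−i+1) on ℂⁿ ⊗ ℂⁿ. (This is the matrix form of the exchange identity for the creation operator β in the paper's Lemma on creation-operator identities.) -/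

import Mathlib

noncomputable section

open Matrix

/-- The permutation operator `P` on `ℂ^N ⊗ ℂ^N`. -/
def permP (N : ℕ) : Matrix (Fin N × Fin N) (Fin N × Fin N) ℂ :=
  fun x y => if x.1 = y.2 ∧ x.2 = y.1 then 1 else 0

/-- The operator `Q = Σ θ_{ij} e_{ij} ⊗ e_{ī j̄}`, `ī = N − i + 1` being `Fin.rev`. -/
def Qop (N : ℕ) (θ : Fin N → ℂ) : Matrix (Fin N × Fin N) (Fin N × Fin N) ℂ :=
  fun x y => if x.2 = Fin.rev x.1 ∧ y.2 = Fin.rev y.1 then θ x.1 * θ y.1 else 0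

/-- The Yang R-matrix `R(u) = I − u⁻¹P` with entries mapped into an algebra `A`. -/
def yangRA (N : ℕ) (A : Type*) [Ring A] [Algebra ℂ A] (u : ℂ) :
    Matrix (Fin N × Fin N) (Fin N × Fin N) A :=
  ((1 : Matrix _ _ ℂ) - u⁻¹ • permP N).map (algebraMap ℂ A)

/-- `R^t(u) = I − u⁻¹Q` with entries mapped into an algebra `A`. -/
def yangRtA (N : ℕ) (θ : Fin N → ℂ) (A : Type*) [Ring A] [Algebra ℂ A] (u : ℂ) :
    Matrix (Fin N × Fin N) (Fin N × Fin N) A :=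
  ((1 : Matrix _ _ ℂ) - u⁻¹ • Qop N θ).map (algebraMap ℂ A)

/-- `Ř(u) = P·R(u)` with entries mapped into an algebra `A`. -/
def yangRcheckA (N : ℕ) (A : Type*) [Ring A] [Algebra ℂ A] (u : ℂ) :
    Matrix (Fin N × Fin N) (Fin N × Fin N) A :=
  (permP N * ((1 : Matrix _ _ ℂ) - u⁻¹ • permP N)).map (algebraMap ℂ A)

/-- `X₁ = X ⊗ I`. -/
def op1 {N : ℕ} {A : Type*} [Ring A] (X : Matrix (Fin N) (Fin N) A) :
    Matrix (Fin N × Fin N) (Fin N × Fin N) A :=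
  fun x y => if x.2 = y.2 then X x.1 y.1 else 0

/-- `X₂ = I ⊗ X`. -/
def op2 {N : ℕ} {A : Type*} [Ring A] (X : Matrix (Fin N) (Fin N) A) :
    Matrix (Fin N × Fin N) (Fin N × Fin N) A :=
  fun x y => if x.1 = y.1 then X x.2 y.2 else 0

/-- Embedding `Fin n → Fin (2n)`, `i ↦ i`. -/
def lo (n : ℕ) (i : Fin n) : Fin (2 * n) := ⟨i.1, by have := i.2; omega⟩

/-- Embedding `Fin n → Fin (2n)`, `i ↦ n + i`. -/
def hi (n : ℕ) (i : Fin n) : Fin (2 * n) := ⟨n + i.1, by have := i.2; omega⟩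

/-- The upper-right block `B(u)`. -/
def blockB {n : ℕ} {A : Type*} (X : Matrix (Fin (2 * n)) (Fin (2 * n)) A) :
    Matrix (Fin n) (Fin n) A := fun i j => X (lo n i) (hi n j)

/-- The orthogonal-type signs on `ℂⁿ` (all equal to `1`). -/
def orthTheta (n : ℕ) : Fin n → ℂ := fun _ => 1

/-! Restrict the reflection equation to rows `(lo j, lo i)` and columns `(hi k, hi l)`.
`P` preserves these index sets, while `Q` pairs each index with its reverse, which lies in the
other half; so the restriction of `S₁ R^t S₂` is `B₁ R^t B₂`, the signs `θ` cancelling in pairs,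
and the reflection equation becomes `R B₁ R^t B₂ = B₂ R^t B₁ R` on `ℂⁿ ⊗ ℂⁿ`. Multiplying on the
left by `P`, which swaps the tensor factors and (in orthogonal type) commutes with `R^t`, gives the
braided form, because `Ř = P R`. -/

namespace YangMatrices

variable {N : ℕ} {A : Type*} [Ring A]

lemma op1_mul_mul_op2_apply (S T : Matrix (Fin N) (Fin N) A)
    (M : Matrix (Fin N × Fin N) (Fin N × Fin N) A) (p q k l : Fin N) :
    (op1 S * M * op2 T) (p, q) (k, l) = ∑ w, ∑ m, S p m * M (m, q) (k, w) * T w l := by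
  simp [mul_apply, Fintype.sum_prod_type, op1, op2, Finset.sum_mul, ite_mul, mul_ite]

lemma op2_mul_mul_op1_apply (S T : Matrix (Fin N) (Fin N) A)
    (M : Matrix (Fin N × Fin N) (Fin N × Fin N) A) (p q c d : Fin N) :
    (op2 T * M * op1 S) (p, q) (c, d) = ∑ m, ∑ w, T q w * M (p, w) (m, d) * S m c := by
  simp [mul_apply, Fintype.sum_prod_type, op1, op2, Finset.sum_mul, ite_mul, mul_ite]

variable [Algebra ℂ A]

lemma yangRA_eq (u : ℂ) :
    yangRA N A u = 1 - u⁻¹ • (permP N).map (algebraMap ℂ A) := by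
  change (Algebra.ofId ℂ A).mapMatrix _ = _
  rw [map_sub, map_one, map_smul]
  rfl

lemma yangRtA_eq (θ : Fin N → ℂ) (u : ℂ) :
    yangRtA N θ A u = 1 - u⁻¹ • (Qop N θ).map (algebraMap ℂ A) := by
  change (Algebra.ofId ℂ A).mapMatrix _ = _
  rw [map_sub, map_one, map_smul]
  rfl

lemma yangRcheckA_eq_mul (u : ℂ) :
    yangRcheckA N A u = (permP N).map (algebraMap ℂ A) * yangRA N A u :=
  Matrix.map_mul

lemma permP_map_mul_apply {ι : Type*} (X : Matrix (Fin N × Fin N) ι A) (p q : Fin N)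
    (y : ι) :
    ((permP N).map (algebraMap ℂ A) * X) (p, q) y = X (q, p) y := by
  rw [mul_apply, Fintype.sum_prod_type]
  simp [permP, apply_ite (algebraMap ℂ A), ite_and, eq_comm (a := p), eq_comm (a := q)]

lemma mul_permP_map_apply {ι : Type*} (X : Matrix ι (Fin N × Fin N) A) (x : ι)
    (k l : Fin N) :
    (X * (permP N).map (algebraMap ℂ A)) x (k, l) = X x (l, k) := by
  rw [mul_apply, Fintype.sum_prod_type]
  simp [permP, apply_ite (algebraMap ℂ A), ite_and, Finset.sum_ite_eq']

lemma yangRA_mul_apply {ι : Type*} (u : ℂ) (X : Matrix (Fin N × Fin N) ι A) (p q : Fin N)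
    (y : ι) :
    (yangRA N A u * X) (p, q) y = X (p, q) y - u⁻¹ • X (q, p) y := by
  rw [yangRA_eq, Matrix.sub_mul, Matrix.one_mul, Matrix.smul_mul, Matrix.sub_apply,
    Matrix.smul_apply, permP_map_mul_apply]

lemma mul_yangRA_apply {ι : Type*} (u : ℂ) (X : Matrix ι (Fin N × Fin N) A)
    (x : ι) (k l : Fin N) :
    (X * yangRA N A u) x (k, l) = X x (k, l) - u⁻¹ • X x (l, k) := by
  rw [yangRA_eq, Matrix.mul_sub, Matrix.mul_one, Matrix.mul_smul, Matrix.sub_apply,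
    Matrix.smul_apply, mul_permP_map_apply]

lemma yangRA_mul_submatrix {m : ℕ} {ι κ : Type*} (f : Fin m → Fin N) (g : κ → ι) (u : ℂ)
    (X : Matrix (Fin N × Fin N) ι A) :
    (yangRA N A u * X).submatrix (Prod.map f f) g =
      yangRA m A u * X.submatrix (Prod.map f f) g := by
  ext ⟨p, q⟩ y
  simp [yangRA_mul_apply]

lemma submatrix_mul_yangRA {m : ℕ} {ι κ : Type*} (f : Fin m → Fin N) (g : κ → ι)
    (u : ℂ) (X : Matrix ι (Fin N × Fin N) A) :
    (X * yangRA N A u).submatrix g (Prod.map f f) =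
      X.submatrix g (Prod.map f f) * yangRA m A u := by
  ext x ⟨k, l⟩
  simp [mul_yangRA_apply]

lemma permP_map_mul_op1 (S : Matrix (Fin N) (Fin N) A) :
    (permP N).map (algebraMap ℂ A) * op1 S = op2 S * (permP N).map (algebraMap ℂ A) := by
  ext ⟨p, q⟩ ⟨k, l⟩
  simp [permP_map_mul_apply, mul_permP_map_apply, op1, op2]

lemma permP_map_mul_op2 (T : Matrix (Fin N) (Fin N) A) :
    (permP N).map (algebraMap ℂ A) * op2 T = op1 T * (permP N).map (algebraMap ℂ A) := by
  ext ⟨p, q⟩ ⟨k, l⟩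
  simp [permP_map_mul_apply, mul_permP_map_apply, op1, op2]

lemma eq_rev_comm {i j : Fin N} : i = Fin.rev j ↔ j = Fin.rev i := by
  rw [eq_comm, Fin.rev_eq_iff]

lemma permP_map_mul_Qop_map {θ : Fin N → ℂ} (hθ : ∀ i, θ (Fin.rev i) = θ i) :
    (permP N).map (algebraMap ℂ A) * (Qop N θ).map (algebraMap ℂ A) =
      (Qop N θ).map (algebraMap ℂ A) * (permP N).map (algebraMap ℂ A) := by
  ext ⟨p, q⟩ ⟨k, l⟩
  simp only [permP_map_mul_apply, mul_permP_map_apply, map_apply, Qop, eq_rev_comm (i := q),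
    eq_rev_comm (i := k)]
  by_cases hpq : p = Fin.rev q
  · by_cases hkl : l = Fin.rev k
    · simp [hpq, hkl, hθ]
    · simp [hkl]
  · simp [hpq]

lemma permP_map_mul_yangRtA {θ : Fin N → ℂ} (hθ : ∀ i, θ (Fin.rev i) = θ i) (u : ℂ) :
    (permP N).map (algebraMap ℂ A) * yangRtA N θ A u =
      yangRtA N θ A u * (permP N).map (algebraMap ℂ A) := by
  rw [yangRtA_eq, mul_sub, sub_mul, mul_one, one_mul, mul_smul_comm, smul_mul_assoc,
    permP_map_mul_Qop_map hθ]

lemma permP_map_conj_op2_mul_yangRtA_mul_op1 {θ : Fin N → ℂ}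
    (hθ : ∀ i, θ (Fin.rev i) = θ i) (u : ℂ) (S T : Matrix (Fin N) (Fin N) A) :
    (permP N).map (algebraMap ℂ A) * (op2 T * yangRtA N θ A u * op1 S) =
      op1 T * yangRtA N θ A u * op2 S * (permP N).map (algebraMap ℂ A) := by
  simp only [← mul_assoc, permP_map_mul_op2]
  simp only [mul_assoc, permP_map_mul_op1, permP_map_mul_yangRtA hθ]

lemma op1_mul_yangRtA_mul_op2_apply (θ : Fin N → ℂ) (u : ℂ) (S T : Matrix (Fin N) (Fin N) A)
    (p q k l : Fin N) :
    (op1 S * yangRtA N θ A u * op2 T) (p, q) (k, l) =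
      S p k * T q l - (u⁻¹ * (θ (Fin.rev q) * θ k)) • (S p (Fin.rev q) * T (Fin.rev k) l) := by
  rw [yangRtA_eq, mul_sub, sub_mul, mul_one, mul_smul_comm, smul_mul_assoc, Matrix.sub_apply,
    Matrix.smul_apply, op1_mul_mul_op2_apply, mul_smul]
  congr 2
  · simp [mul_apply, Fintype.sum_prod_type, op1, op2]
  · simp [Qop, eq_rev_comm (i := q), ite_and, Algebra.algebraMap_eq_smul_one, mul_ite, ite_mul,
      Finset.sum_ite_eq']

lemma op2_mul_yangRtA_mul_op1_apply (θ : Fin N → ℂ) (u : ℂ) (S T : Matrix (Fin N) (Fin N) A)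
    (p q c d : Fin N) :
    (op2 T * yangRtA N θ A u * op1 S) (p, q) (c, d) =
      T q d * S p c - (u⁻¹ * (θ p * θ (Fin.rev d))) • (T q (Fin.rev p) * S (Fin.rev d) c) := by
  rw [yangRtA_eq, mul_sub, sub_mul, mul_one, mul_smul_comm, smul_mul_assoc, Matrix.sub_apply,
    Matrix.smul_apply, op2_mul_mul_op1_apply, mul_smul]
  congr 2
  · simp [mul_apply, Fintype.sum_prod_type, op1, op2]
  · simp [Qop, eq_rev_comm (i := d), ite_and, Algebra.algebraMap_eq_smul_one, mul_ite, ite_mul,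
      Finset.sum_ite_eq']

end YangMatrices

open YangMatrices

section Blocks

variable {A : Type*} [Ring A] [Algebra ℂ A]

lemma rev_lo {n : ℕ} (i : Fin n) : Fin.rev (lo n i) = hi n (Fin.rev i) := by
  ext
  simp [Fin.rev, lo, hi]
  omega

lemma rev_hi {n : ℕ} (i : Fin n) : Fin.rev (hi n i) = lo n (Fin.rev i) := by
  ext
  simp [Fin.rev, lo, hi]
  omega

variable {n : ℕ} {θ : Fin (2 * n) → ℂ}

lemma submatrix_op1_mul_yangRtA_mul_op2 (hθ : ∀ x y, θ (hi n x) * θ (hi n y) = 1) (u : ℂ)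
    (S T : Matrix (Fin (2 * n)) (Fin (2 * n)) A) :
    (op1 S * yangRtA (2 * n) θ A u * op2 T).submatrix (Prod.map (lo n) (lo n))
        (Prod.map (hi n) (hi n)) =
      op1 (blockB S) * yangRtA n (orthTheta n) A u * op2 (blockB T) := by
  ext ⟨p, q⟩ ⟨k, l⟩
  simp [op1_mul_yangRtA_mul_op2_apply, rev_lo, rev_hi, hθ, blockB, orthTheta]

lemma submatrix_op2_mul_yangRtA_mul_op1 (hθ : ∀ x y, θ (lo n x) * θ (lo n y) = 1) (u : ℂ)
    (S T : Matrix (Fin (2 * n)) (Fin (2 * n)) A) :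
    (op2 T * yangRtA (2 * n) θ A u * op1 S).submatrix (Prod.map (lo n) (lo n))
        (Prod.map (hi n) (hi n)) =
      op2 (blockB T) * yangRtA n (orthTheta n) A u * op1 (blockB S) := by
  ext ⟨p, q⟩ ⟨c, d⟩
  simp [op2_mul_yangRtA_mul_op1_apply, rev_lo, rev_hi, hθ, blockB, orthTheta]

lemma blockB_reflection_equation (hlo : ∀ x y, θ (lo n x) * θ (lo n y) = 1)
    (hhi : ∀ x y, θ (hi n x) * θ (hi n y) = 1) {u v : ℂ}
    {S T : Matrix (Fin (2 * n)) (Fin (2 * n)) A}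
    (h : yangRA (2 * n) A u * op1 S * yangRtA (2 * n) θ A v * op2 T =
      op2 T * yangRtA (2 * n) θ A v * op1 S * yangRA (2 * n) A u) :
    yangRA n A u * (op1 (blockB S) * yangRtA n (orthTheta n) A v * op2 (blockB T)) =
      op2 (blockB T) * yangRtA n (orthTheta n) A v * op1 (blockB S) * yangRA n A u := by
  rw [← submatrix_op1_mul_yangRtA_mul_op2 hhi, ← yangRA_mul_submatrix,
    ← submatrix_op2_mul_yangRtA_mul_op1 hlo, ← submatrix_mul_yangRA]
  simp only [← mul_assoc, h]

lemma theta_mul_eq_one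
    (hθ : (∀ i, θ i = 1) ∨ (∀ i : Fin (2 * n), θ i = if (i : ℕ) < n then -1 else 1))
    {i j : Fin (2 * n)} (hij : (i : ℕ) < n ↔ (j : ℕ) < n) : θ i * θ j = 1 := by
  rcases hθ with h | h
  · simp [h]
  · by_cases hi : (i : ℕ) < n <;> simp [h, hi, ← hij]

end Blocks

theorem block_BB_braided_relation_general (n : ℕ) (ρ : ℂ) (θ : Fin (2 * n) → ℂ)
    (hcase : (∀ i, θ i = 1) ∨
      (∀ i : Fin (2 * n), θ i = if (i : ℕ) < n then -1 else 1))
    (A : Type*) [Ring A] [Algebra ℂ A]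
    (S : ℂ → Matrix (Fin (2 * n)) (Fin (2 * n)) A)
    (D : Set ℂ)
    (hRE : ∀ u ∈ D, ∀ v ∈ D, u ≠ v → u + v + ρ ≠ 0 →
      yangRA (2 * n) A (u - v) * op1 (S u) * yangRtA (2 * n) θ A (-u - v - ρ) * op2 (S v) =
        op2 (S v) * yangRtA (2 * n) θ A (-u - v - ρ) * op1 (S u)
          * yangRA (2 * n) A (u - v)) :
    ∀ u₁ ∈ D, ∀ u₂ ∈ D, u₁ ≠ u₂ → u₁ + u₂ + ρ ≠ 0 →
      yangRcheckA n A (u₁ - u₂) * op1 (blockB (S u₁))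
          * yangRtA n (orthTheta n) A (-u₁ - u₂ - ρ) * op2 (blockB (S u₂)) =
        op1 (blockB (S u₂)) * yangRtA n (orthTheta n) A (-u₁ - u₂ - ρ)
          * op2 (blockB (S u₁)) * yangRcheckA n A (u₁ - u₂) := by
  intro u₁ h₁ u₂ h₂ hne hsum
  have hblock := blockB_reflection_equation
    (fun _ _ => theta_mul_eq_one hcase (by simp [lo]))
    (fun _ _ => theta_mul_eq_one hcase (by simp [hi])) (hRE u₁ h₁ u₂ h₂ hne hsum)
  set B₁ := blockB (S u₁)
  set B₂ := blockB (S u₂)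
  set Rt := yangRtA n (orthTheta n) A (-u₁ - u₂ - ρ)
  set R := yangRA n A (u₁ - u₂)
  set P := (permP n).map (algebraMap ℂ A)
  have hcheck : yangRcheckA n A (u₁ - u₂) = P * R := yangRcheckA_eq_mul _
  calc yangRcheckA n A (u₁ - u₂) * op1 B₁ * Rt * op2 B₂
      = P * (R * (op1 B₁ * Rt * op2 B₂)) := by simp only [hcheck, mul_assoc]
    _ = P * (op2 B₂ * Rt * op1 B₁) * R := by rw [hblock, ← mul_assoc]
    _ = op1 B₂ * Rt * op2 B₁ * (P * R) := by
        rw [permP_map_conj_op2_mul_yangRtA_mul_op1 (fun _ => rfl), mul_assoc _ P]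
    _ = op1 B₂ * Rt * op2 B₁ * yangRcheckA n A (u₁ - u₂) := by rw [hcheck]

/-- the braided BB exchange relation for the upper-right block of a
solution `S(u)` of the reflection equation with shift `ρ`:
`Ř₁₂(u₁−u₂) B₁(u₁) R^t₁₂(−u₁−u₂−ρ) B₂(u₂) = B₁(u₂) R^t₁₂(−u₁−u₂−ρ) B₂(u₁) Ř₁₂(u₁−u₂)`,
with `Ř(u) = P·R(u)` and `Q` of orthogonal type on `ℂⁿ ⊗ ℂⁿ`. -/
theorem block_BB_braided_relation (n : ℕ) (ρ : ℂ) (θ : Fin (2 * n) → ℂ)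
    (hcase : (∀ i, θ i = 1) ∨
      (∀ i : Fin (2 * n), θ i = if (i : ℕ) < n then -1 else 1))
    (A : Type*) [Ring A] [Algebra ℂ A]
    (S : ℂ → Matrix (Fin (2 * n)) (Fin (2 * n)) A)
    (D : Set ℂ) (hD : Dᶜ.Finite)
    (hRE : ∀ u ∈ D, ∀ v ∈ D, u ≠ v → u + v + ρ ≠ 0 →
      yangRA (2 * n) A (u - v) * op1 (S u) * yangRtA (2 * n) θ A (-u - v - ρ) * op2 (S v) =
        op2 (S v) * yangRtA (2 * n) θ A (-u - v - ρ) * op1 (S u)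
          * yangRA (2 * n) A (u - v)) :
    ∀ u₁ ∈ D, ∀ u₂ ∈ D, u₁ ≠ u₂ → u₁ + u₂ + ρ ≠ 0 →
      yangRcheckA n A (u₁ - u₂) * op1 (blockB (S u₁))
          * yangRtA n (orthTheta n) A (-u₁ - u₂ - ρ) * op2 (blockB (S u₂)) =
        op1 (blockB (S u₂)) * yangRtA n (orthTheta n) A (-u₁ - u₂ - ρ)
          * op2 (blockB (S u₁)) * yangRcheckA n A (u₁ - u₂) :=
  block_BB_braided_relation_general n ρ θ hcase A S D hRE
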